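/- The divisibility index of Ł_{n,k} (the largest d such that Ł_d embeds into Ł_{n,k}) equals gcd(n,k); in particular the divisibility index of Ł_n^∞ = Ł_{n,0} is n. -/

import Mathlib

/-- The interval `[0, u]` in a totally ordered abelian group: the universe of
the Wajsberg hoop `Γ(G, u)`. -/
def Gam {G : Type*} [AddCommGroup G] [LinearOrder G] [IsOrderedAddMonoid G] (u : G) : Type _ :=
  {x : G // 0 ≤ x ∧ x ≤ u}

/-- Product `a·b = max(a+b-u, 0)` of `Γ(G,u)`. -/
def hmul {G : Type*} [AddCommGroup G] [LinearOrder G] [IsOrderedAddMonoid G] {u : G} (a b : Gam u) : Gam u :=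
  ⟨max (a.1 + b.1 - u) 0, le_max_right _ _,
    max_le (sub_le_iff_le_add.mpr (add_le_add a.2.2 b.2.2)) (a.2.1.trans a.2.2)⟩

/-- Residuum `a→b = min(u-a+b, u)` of `Γ(G,u)`. -/
def himp {G : Type*} [AddCommGroup G] [LinearOrder G] [IsOrderedAddMonoid G] {u : G} (a b : Gam u) : Gam u :=
  ⟨min (u - a.1 + b.1) u,
    le_min (add_nonneg (sub_nonneg.mpr a.2.2) b.2.1) (a.2.1.trans a.2.2),
    min_le_right _ _⟩

/-- Top element (monoid unit) of `Γ(G,u)`. -/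
def hone {G : Type*} [AddCommGroup G] [LinearOrder G] [IsOrderedAddMonoid G] (u : G) (hu : 0 ≤ u) : Gam u :=
  ⟨u, hu, le_rfl⟩

/-- An embedding of hoops: an injective map preserving `·`, `→` and `1`. -/
structure IsHoopEmbedding {A B : Type*} (mA : A → A → A) (iA : A → A → A) (oA : A)
    (mB : B → B → B) (iB : B → B → B) (oB : B) (f : A → B) : Prop where
  inj : Function.Injective f
  map_mul : ∀ x y, f (mA x y) = mB (f x) (f y)
  map_imp : ∀ x y, f (iA x y) = iB (f x) (f y)
  map_one : f oA = oB

theorem lex_nonneg (a b : ℤ) (h : 0 < a) : (0 : ℤ ×ₗ ℤ) ≤ toLex (a, b) :=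
  Prod.Lex.le_iff.mpr (Or.inl h)

/-!
If `f` embeds `Ł_d` into `Γ(H, v)` and `c = d - 1` is the coatom of `Ł_d`, put `z = v - f c`.
Embeddings preserve the order (`a ≤ b ↔ a → b = 1`), and in `Γ(H, v)` the residuum `c → a`
is `v - c + a` for `a ≤ c`; since `c → (d - m - 1) = d - m` in `Ł_d`, this gives
`f (d - m) = v - m • z`. The bottom of `Ł_d` is idempotent, and the only idempotents of
`Γ(H, v)` are `0` and `v`, so `v = d • z`. Conversely, if `v = d • z` then `x ↦ x • z` embeds
`Ł_d`. In `ℤ ×ₗ ℤ`, `(n, k)` is divisible by `d` exactly when `d ∣ n` and `d ∣ k`, that is,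
when `d ∣ gcd(n, k)`.
-/

section Gamma

variable {G : Type*} [AddCommGroup G] [LinearOrder G] [IsOrderedAddMonoid G] {u : G}
variable {H : Type*} [AddCommGroup H] [LinearOrder H] [IsOrderedAddMonoid H] {v : H}

namespace Gam

theorem himp_val_of_le {a b : Gam u} (h : b.1 ≤ a.1) : (himp a b).1 = u - a.1 + b.1 :=
  min_eq_left (by rw [sub_add_eq_add_sub, sub_le_iff_le_add]; exact add_le_add_right h u)

theorem himp_eq_hone_iff (hu : 0 ≤ u) {a b : Gam u} : himp a b = hone u hu ↔ a.1 ≤ b.1 := by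
  have hval : himp a b = hone u hu ↔ min (u - a.1 + b.1) u = u :=
    ⟨congrArg Subtype.val, fun h => Subtype.ext h⟩
  rw [hval, min_eq_right_iff, sub_add_eq_add_sub, le_sub_iff_add_le, add_le_add_iff_left]

theorem val_eq_zero_or_eq_of_hmul_self {a : Gam u} (h : hmul a a = a) : a.1 = 0 ∨ a.1 = u := by
  have h' : max (a.1 + a.1 - u) 0 = a.1 := congrArg Subtype.val h
  rcases le_total 0 (a.1 + a.1 - u) with hpos | hneg
  · rw [max_eq_left hpos, sub_eq_iff_eq_add, add_right_inj] at h'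
    exact Or.inr h'
  · rw [max_eq_right hneg] at h'
    exact Or.inl h'.symm

def map (φ : G →+ H) (hφ : Monotone φ) (huv : φ u = v) (a : Gam u) : Gam v :=
  ⟨φ a.1, map_zero φ ▸ hφ a.2.1, huv ▸ hφ a.2.2⟩

theorem isHoopEmbedding_map (φ : G →+ H) (hφ : StrictMono φ) (hu : 0 ≤ u) (hv : 0 ≤ v)
    (huv : φ u = v) :
    IsHoopEmbedding hmul himp (hone u hu) hmul himp (hone v hv) (Gam.map φ hφ.monotone huv) where
  inj _ _ h := Subtype.ext (hφ.injective (congrArg Subtype.val h))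
  map_mul a b := Subtype.ext <| by
    change φ (max (a.1 + b.1 - u) 0) = max (φ a.1 + φ b.1 - v) 0
    rw [hφ.monotone.map_max, map_zero, map_sub, map_add, huv]
  map_imp a b := Subtype.ext <| by
    change φ (min (u - a.1 + b.1) u) = min (v - φ a.1 + φ b.1) v
    rw [hφ.monotone.map_min, map_add, map_sub, huv]
  map_one := Subtype.ext huv

end Gam

namespace IsHoopEmbedding

variable {hu : 0 ≤ u} {hv : 0 ≤ v}

theorem val_le_val {f : Gam u → Gam v}
    (hf : IsHoopEmbedding hmul himp (hone u hu) hmul himp (hone v hv) f)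
    {a b : Gam u} (h : a.1 ≤ b.1) : (f a).1 ≤ (f b).1 := by
  rw [← Gam.himp_eq_hone_iff hv, ← hf.map_imp, (Gam.himp_eq_hone_iff hu).2 h, hf.map_one]

variable {d : ℕ} {f : Gam (d : ℤ) → Gam v}

theorem val_apply_eq_sub_nsmul
    (hf : IsHoopEmbedding hmul himp (hone _ (Int.natCast_nonneg d)) hmul himp (hone v hv) f)
    {c : Gam (d : ℤ)} (hc : c.1 = d - 1) (m : ℕ) (a : Gam (d : ℤ)) (ha : a.1 = d - m) :
    (f a).1 = v - m • (v - (f c).1) := by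
  induction m generalizing a with
  | zero =>
    have ha_one : a = hone _ (Int.natCast_nonneg d) :=
      Subtype.ext (by change a.1 = d; simpa using ha)
    rw [ha_one, hf.map_one]
    simp [hone]
  | succ m ih =>
    have hac : a.1 ≤ c.1 := by rw [ha, hc]; push_cast; omega
    have hstep := ih (himp c a) (by rw [Gam.himp_val_of_le hac, ha, hc]; push_cast; ring)
    rw [hf.map_imp, Gam.himp_val_of_le (hf.val_le_val hac)] at hstep
    rw [succ_nsmul, sub_add_eq_sub_sub, ← hstep]
    abel

theorem exists_nsmul_eq (hd : 0 < d)
    (hf : IsHoopEmbedding hmul himp (hone _ (Int.natCast_nonneg d)) hmul himp (hone v hv) f) :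
    ∃ z : H, d • z = v := by
  let c : Gam (d : ℤ) := ⟨d - 1, by omega, by omega⟩
  let bot : Gam (d : ℤ) := ⟨0, le_rfl, Int.natCast_nonneg d⟩
  have hbot_idem : hmul bot bot = bot :=
    Subtype.ext (max_eq_right (by change (0 : ℤ) + 0 - d ≤ 0; omega))
  rcases Gam.val_eq_zero_or_eq_of_hmul_self (a := f bot) (by rw [← hf.map_mul, hbot_idem])
    with h | h
  · rw [hf.val_apply_eq_sub_nsmul (c := c) rfl d bot (by simp [bot]), sub_eq_zero] at h
    exact ⟨_, h.symm⟩
  · have hbot_one : bot = hone _ (Int.natCast_nonneg d) :=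
      hf.inj (Subtype.ext (by rw [h, hf.map_one]; rfl))
    have : (0 : ℤ) = d := congrArg Subtype.val hbot_one
    omega

end IsHoopEmbedding

theorem exists_isHoopEmbedding_iff_exists_nsmul_eq {d : ℕ} (hd : 0 < d) (hv : 0 < v) :
    (∃ f : Gam (d : ℤ) → Gam v,
        IsHoopEmbedding hmul himp (hone _ (Int.natCast_nonneg d)) hmul himp (hone v hv.le) f) ↔
      ∃ z : H, d • z = v := by
  refine ⟨fun ⟨_, hf⟩ => hf.exists_nsmul_eq hd, fun ⟨z, hz⟩ => ?_⟩
  have hz_pos : 0 < z := lt_of_not_ge fun hz' => hv.not_ge (hz ▸ nsmul_nonpos hz' d)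
  exact ⟨_, Gam.isHoopEmbedding_map (zmultiplesHom H z) (zsmul_left_strictMono hz_pos) _ _
    (by rw [zmultiplesHom_apply, natCast_zsmul, hz])⟩

end Gamma

theorem exists_nsmul_eq_toLex_iff {d : ℕ} {a b : ℤ} :
    (∃ z : ℤ ×ₗ ℤ, d • z = toLex (a, b)) ↔ (d : ℤ) ∣ a ∧ (d : ℤ) ∣ b := by
  have nsmul_toLex : ∀ x y : ℤ, d • toLex (x, y) = toLex ((d : ℤ) * x, (d : ℤ) * y) := by
    intro x y
    change toLex (d • (x, y)) = _
    simp
  constructor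
  · rintro ⟨z, hz⟩
    obtain ⟨⟨x, y⟩, rfl⟩ := toLex.surjective z
    rw [nsmul_toLex, toLex_inj, Prod.mk.injEq] at hz
    exact ⟨⟨x, hz.1.symm⟩, ⟨y, hz.2.symm⟩⟩
  · rintro ⟨⟨x, rfl⟩, ⟨y, rfl⟩⟩
    exact ⟨toLex (x, y), nsmul_toLex x y⟩

/-- the divisibility index of `Ł_{n,k}` — the largest `d` such that the
finite chain `Ł_d` embeds into `Ł_{n,k}` — equals `gcd(n,k)` (in particular, for
`Ł_n^∞ = Ł_{n,0}` it is `gcd(n,0) = n`). -/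
theorem divisibility_index_Lnk (n k : ℕ) (hn : 1 ≤ n) :
    (∃ f : Gam ((Nat.gcd n k : ℤ)) → Gam (toLex ((n : ℤ), (k : ℤ))),
        IsHoopEmbedding hmul himp (hone _ (Int.natCast_nonneg _))
          hmul himp (hone _ (lex_nonneg _ _ (by exact_mod_cast hn))) f) ∧
    (∀ d : ℕ, 1 ≤ d →
      (∃ f : Gam ((d : ℤ)) → Gam (toLex ((n : ℤ), (k : ℤ))),
        IsHoopEmbedding hmul himp (hone _ (Int.natCast_nonneg _))
          hmul himp (hone _ (lex_nonneg _ _ (by exact_mod_cast hn))) f) →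
      d ≤ Nat.gcd n k) := by
  have hu : (0 : ℤ ×ₗ ℤ) < toLex ((n : ℤ), (k : ℤ)) :=
    Prod.Lex.lt_iff.mpr (Or.inl (by change (0 : ℤ) < n; omega))
  have hgcd : 0 < Nat.gcd n k := Nat.gcd_pos_of_pos_left k hn
  refine ⟨(exists_isHoopEmbedding_iff_exists_nsmul_eq hgcd hu).2 ?_, fun d hd hf => ?_⟩
  · exact exists_nsmul_eq_toLex_iff.2 ⟨Int.natCast_dvd_natCast.2 (Nat.gcd_dvd_left n k),
      Int.natCast_dvd_natCast.2 (Nat.gcd_dvd_right n k)⟩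
  · obtain ⟨hdn, hdk⟩ :=
      exists_nsmul_eq_toLex_iff.1 ((exists_isHoopEmbedding_iff_exists_nsmul_eq hd hu).1 hf)
    exact Nat.le_of_dvd hgcd
      (Nat.dvd_gcd (Int.natCast_dvd_natCast.1 hdn) (Int.natCast_dvd_natCast.1 hdk))
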